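/- If all instructions have unit execution time (τ ≡ 1), the minimum execution time of a trace μ on unboundedly many processors equals the height (number of factors) of the Foata normal form of μ. -/

import Mathlib

/-- One elementary transposition of adjacent independent letters. -/
def TraceStep {E : Type} (I : E → E → Prop) (w₁ w₂ : List E) : Prop :=
  ∃ u v a b, I a b ∧ w₁ = u ++ a :: b :: v ∧ w₂ = u ++ b :: a :: v

/-- Trace equivalence: the equivalence relation generated by transposing
adjacent independent letters. -/
def TraceEquiv {E : Type} (I : E → E → Prop) : List E → List E → Prop :=
  Relation.EqvGen (TraceStep I)

/-- A step: a nonempty word of pairwise independent distinct letters written in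
increasing order. -/
def IsStep {E : Type} [LT E] (I : E → E → Prop) (c : List E) : Prop :=
  c ≠ [] ∧ c.Pairwise (· < ·) ∧ c.Pairwise I

/-- The Foata conditions for a factorization into steps. -/
def IsFoata {E : Type} [LT E] (I : E → E → Prop) (L : List (List E)) : Prop :=
  (∀ c ∈ L, IsStep I c) ∧
  L.Chain' (fun c₁ c₂ => ∀ a ∈ c₂, ∃ b ∈ c₁, ¬ I a b)

/-- A parallel process: a factorization into nonempty blocks of pairwise
independent letters. -/
def IsParProc {E : Type} (I : E → E → Prop) (M : List (List E)) : Prop :=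
  ∀ c ∈ M, c ≠ [] ∧ c.Pairwise I

/-- Replace each letter `e` of a word by `τ e` copies of the corresponding
unit-time small instruction. -/
def expandWord {E : Type} (τ : E → ℕ) (w : List E) : List E :=
  (w.map fun e => List.replicate (τ e) e).flatten

/-!
Letters that are dependent (not independent) are never transposed, so if a word contains a
subword `x₁ x₂ … xₖ` with each `xᵢ` dependent on `xᵢ₊₁`, every word of the same trace contains
it too. A parallel process meets such a dependence chain at most once per step, hence takes at
least `k` steps. In a Foata normal form every letter of a step depends on some letter of the
preceding step, so walking back from the last step gives a dependence chain as long as the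
form is high; and the Foata form is itself a parallel process of that height.
-/

open List

variable {E : Type} {I : E → E → Prop}

theorem TraceStep.symm [Std.Symm I] {w₁ w₂ : List E} (h : TraceStep I w₁ w₂) :
    TraceStep I w₂ w₁ := by
  obtain ⟨u, v, a, b, hab, rfl, rfl⟩ := h
  exact ⟨u, v, b, a, Std.Symm.symm a b hab, rfl, rfl⟩

theorem TraceStep.sublist_of_sublist {w₁ w₂ c : List E} (h : TraceStep I w₁ w₂)
    (hc : c.IsChain (fun x y => ¬ I x y)) (hsub : c <+ w₁) : c <+ w₂ := by
  obtain ⟨u, v, a, b, hab, rfl, rfl⟩ := h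
  obtain ⟨c₁, c₂, rfl, hc₁, hc₂⟩ := sublist_append_iff.mp hsub
  refine sublist_append_iff.mpr ⟨c₁, c₂, rfl, hc₁, ?_⟩
  rcases sublist_cons_iff.mp hc₂ with hc₂ | ⟨c₃, rfl, hc₃⟩
  · exact hc₂.trans ((sublist_cons_self a v).cons_cons b)
  · rcases sublist_cons_iff.mp hc₃ with hc₃ | ⟨c₄, rfl, -⟩
    · exact (hc₃.cons_cons a).trans (sublist_cons_self b (a :: v))
    · exact absurd hab (isChain_cons_cons.mp (isChain_append.mp hc).2.1).1

theorem TraceEquiv.sublist_iff [Std.Symm I] {w₁ w₂ c : List E} (h : TraceEquiv I w₁ w₂)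
    (hc : c.IsChain (fun x y => ¬ I x y)) : c <+ w₁ ↔ c <+ w₂ := by
  induction h with
  | rel _ _ h => exact ⟨h.sublist_of_sublist hc, h.symm.sublist_of_sublist hc⟩
  | refl => rfl
  | symm _ _ _ ih => exact ih.symm
  | trans _ _ _ _ _ ih₁ ih₂ => exact ih₁.trans ih₂

theorem length_le_one_of_isChain_of_sublist_of_pairwise {b c : List E}
    (hc : c.IsChain (fun x y => ¬ I x y)) (hsub : c <+ b) (hb : b.Pairwise I) :
    c.length ≤ 1 := by
  match c, hc, hb.sublist hsub with
  | [], _, _ | [_], _, _ => simp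
  | _ :: _ :: _, hc, hpw =>
    exact absurd (rel_of_pairwise_cons hpw mem_cons_self) (isChain_cons_cons.mp hc).1

theorem IsParProc.length_le_of_isChain_of_sublist {M : List (List E)} (hM : IsParProc I M)
    {c : List E} (hc : c.IsChain (fun x y => ¬ I x y)) (hsub : c <+ M.flatten) :
    c.length ≤ M.length := by
  induction M generalizing c with
  | nil => simp_all
  | cons b M ih =>
    obtain ⟨c₁, c₂, rfl, hc₁, hc₂⟩ := sublist_append_iff.mp (flatten_cons ▸ hsub)
    obtain ⟨hch₁, hch₂, -⟩ := isChain_append.mp hc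
    have h₁ := length_le_one_of_isChain_of_sublist_of_pairwise hch₁ hc₁ (hM b mem_cons_self).2
    have h₂ := ih (fun d hd => hM d (mem_cons_of_mem b hd)) hch₂ hc₂
    simp only [length_append, length_cons]
    omega

section Foata

variable [LT E]

theorem IsFoata.tail {b : List E} {L : List (List E)} (h : IsFoata I (b :: L)) : IsFoata I L :=
  ⟨fun c hc => h.1 c (mem_cons_of_mem b hc), h.2.tail⟩

theorem IsFoata.isParProc {L : List (List E)} (h : IsFoata I L) : IsParProc I L :=
  fun c hc => ⟨(h.1 c hc).1, (h.1 c hc).2.2⟩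

theorem IsFoata.exists_isChain_sublist_of_cons [Std.Symm I] {b : List E} {L : List (List E)}
    (h : IsFoata I (b :: L)) :
    ∃ x ∈ b, ∃ c : List E, (x :: c).IsChain (fun x y => ¬ I x y) ∧
      x :: c <+ (b :: L).flatten ∧ c.length = L.length := by
  induction L generalizing b with
  | nil =>
    obtain ⟨x, hx⟩ := exists_mem_of_ne_nil b (h.1 b mem_cons_self).1
    exact ⟨x, hx, [], isChain_singleton x, by simpa using hx, rfl⟩
  | cons b' L ih =>
    obtain ⟨y, hy, c, hc, hsub, hlen⟩ := ih h.tail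
    obtain ⟨x, hx, hyx⟩ := (isChain_cons_cons.mp h.2).1 y hy
    refine ⟨x, hx, y :: c, isChain_cons_cons.mpr ⟨fun hxy => hyx (Std.Symm.symm x y hxy), hc⟩,
      ?_, by simpa using hlen⟩
    rw [flatten_cons]
    exact (singleton_sublist.mpr hx).append hsub

theorem IsFoata.exists_isChain_sublist_length_eq [Std.Symm I] {L : List (List E)}
    (h : IsFoata I L) :
    ∃ c : List E, c.IsChain (fun x y => ¬ I x y) ∧ c <+ L.flatten ∧ c.length = L.length := by
  cases L with
  | nil => exact ⟨[], isChain_nil, nil_sublist _, rfl⟩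
  | cons b L =>
    obtain ⟨x, -, c, hc, hsub, hlen⟩ := h.exists_isChain_sublist_of_cons
    exact ⟨x :: c, hc, hsub, by simp [hlen]⟩

end Foata

theorem min_time_eq_foata_height_of_unit_times_general
    {E : Type} [LinearOrder E]
    (I : E → E → Prop) (hsym : Symmetric I)
    (τ : E → ℕ)
    (w : List E) (L : List (List E))
    (hL : IsFoata I L) (hLw : TraceEquiv I L.flatten (expandWord τ w)) :
    IsLeast {m : ℕ | ∃ M : List (List E), IsParProc I M ∧
      TraceEquiv I M.flatten (expandWord τ w) ∧ M.length = m} L.length := by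
  have : Std.Symm I := ⟨fun _ _ h => hsym h⟩
  refine ⟨⟨L, hL.isParProc, hLw, rfl⟩, ?_⟩
  rintro m ⟨M, hM, hMw, rfl⟩
  obtain ⟨c, hc, hsub, hlen⟩ := hL.exists_isChain_sublist_length_eq
  have hLM : TraceEquiv I L.flatten M.flatten := .trans _ _ _ hLw (.symm _ _ hMw)
  exact hlen ▸ hM.length_le_of_isChain_of_sublist hc ((hLM.sublist_iff hc).mp hsub)

/-- with unit execution times (`τ ≡ 1`), the minimum execution
time of a trace on unboundedly many processors equals the height of its Foata
normal form. -/
theorem min_time_eq_foata_height_of_unit_times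
    {E : Type} [LinearOrder E] [Fintype E]
    (I : E → E → Prop) (hirr : Irreflexive I) (hsym : Symmetric I)
    (τ : E → ℕ) (hτ : ∀ e, τ e = 1)
    (w : List E) (L : List (List E))
    (hL : IsFoata I L) (hLw : TraceEquiv I L.flatten (expandWord τ w)) :
    IsLeast {m : ℕ | ∃ M : List (List E), IsParProc I M ∧
      TraceEquiv I M.flatten (expandWord τ w) ∧ M.length = m} L.length :=
  min_time_eq_foata_height_of_unit_times_general I hsym τ w L hL hLw
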